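/- Fix δ∈(0,1/2). There exists a constant v_min>0 such that for all distinct y,y'∈𝒴, all query plans r, and all s∈[δ,1−δ]: Var_{ℚ_{y,y',r,s}}(Δ_{y,y'}(r)) ≥ v_min · n_{y,y'}(r). -/
import Mathlib


open Finset Set
open scoped Classical BigOperators ENNReal

namespace MultiLLM

noncomputable section

variable {L K : ℕ}

/-- The observation space for a query plan `r`: model `m` is queried `r m` times. -/
abbrev Obs (𝒳 : Fin K → Type) (r : Fin K → ℕ) := ∀ m : Fin K, Fin (r m) → 𝒳 m

variable {𝒳 : Fin K → Type} [∀ m, Fintype (𝒳 m)]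

/-- Conditional likelihood of an observation vector given `Y = y`. -/
def prodLik (p : ∀ m : Fin K, 𝒳 m → Fin L → ℝ) (r : Fin K → ℕ) (y : Fin L)
    (x : Obs 𝒳 r) : ℝ :=
  ∏ m, ∏ t, p m (x m t) y

/-- MAP score of label `y` at observation `x`. -/
def score (π : Fin L → ℝ) (p : ∀ m : Fin K, 𝒳 m → Fin L → ℝ) (r : Fin K → ℕ)
    (y : Fin L) (x : Obs 𝒳 r) : ℝ :=
  π y * prodLik p r y x

/-- Conditional probability of an event `E` given `Y = y`. -/
def condProb (p : ∀ m : Fin K, 𝒳 m → Fin L → ℝ) (r : Fin K → ℕ) (y : Fin L)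
    (E : Set (Obs 𝒳 r)) : ℝ :=
  ∑ x : Obs 𝒳 r, E.indicator (prodLik p r y) x

/-- `Yhat` is a MAP estimator for plan `r`. -/
def IsMAP (π : Fin L → ℝ) (p : ∀ m : Fin K, 𝒳 m → Fin L → ℝ) (r : Fin K → ℕ)
    (Yhat : Obs 𝒳 r → Fin L) : Prop :=
  ∀ x : Obs 𝒳 r, ∀ y : Fin L, score π p r y x ≤ score π p r (Yhat x) x

/-- Statewise error probability of estimator `Yhat` when the truth is `y`. -/
def Pe (p : ∀ m : Fin K, 𝒳 m → Fin L → ℝ) (r : Fin K → ℕ) (y : Fin L)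
    (Yhat : Obs 𝒳 r → Fin L) : ℝ :=
  condProb p r y {x | Yhat x ≠ y}

/-- Log-likelihood difference between competing label `y'` and true label `y`. -/
def LLdiff (π : Fin L → ℝ) (p : ∀ m : Fin K, 𝒳 m → Fin L → ℝ) (r : Fin K → ℕ)
    (y y' : Fin L) (x : Obs 𝒳 r) : ℝ :=
  Real.log (π y' / π y) + ∑ m, ∑ t, Real.log (p m (x m t) y' / p m (x m t) y)

/-- Chernoff affinity factor `M_m^{(y,y')}(s)`. -/
def chernoffM (p : ∀ m : Fin K, 𝒳 m → Fin L → ℝ) (m : Fin K) (y y' : Fin L)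
    (s : ℝ) : ℝ :=
  ∑ x : 𝒳 m, p m x y ^ (1 - s) * p m x y' ^ s

/-- Pairwise Chernoff proxy `P̄_{y,y'}(r; s)`. -/
def proxy (π : Fin L → ℝ) (p : ∀ m : Fin K, 𝒳 m → Fin L → ℝ) (r : Fin K → ℕ)
    (y y' : Fin L) (s : ℝ) : ℝ :=
  (π y' / π y) ^ s * ∏ m, chernoffM p m y y' s ^ r m

/-- Optimized pairwise Chernoff proxy `P̄_{y,y'}(r) = min_{s ∈ [0,1]} P̄_{y,y'}(r; s)`. -/
def proxyOpt (π : Fin L → ℝ) (p : ∀ m : Fin K, 𝒳 m → Fin L → ℝ) (r : Fin K → ℕ)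
    (y y' : Fin L) : ℝ :=
  sInf ((fun s => proxy π p r y y' s) '' Set.Icc (0 : ℝ) 1)

/-- Surrogate statewise error bound `P̄_e(y; r)`. -/
def PeBar (π : Fin L → ℝ) (p : ∀ m : Fin K, 𝒳 m → Fin L → ℝ) (r : Fin K → ℕ)
    (y : Fin L) : ℝ :=
  ∑ y' ∈ Finset.univ.filter (fun y' => y' ≠ y), proxyOpt π p r y y'

/-- Total cost of a query plan. -/
def cost (c : Fin K → ℝ) (r : Fin K → ℕ) : ℝ := ∑ m, c m * (r m : ℝ)

/-- Effective sample size `n_{y,y'}(r)`: total queries to models distinguishing `y,y'`. -/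
def effSample (p : ∀ m : Fin K, 𝒳 m → Fin L → ℝ) (r : Fin K → ℕ) (y y' : Fin L) : ℕ :=
  ∑ m ∈ Finset.univ.filter (fun m => (fun x => p m x y) ≠ (fun x => p m x y')), r m

/-- Tilted per-symbol distribution `q_m^{(y,y')}(x; s)`. -/
def qTilt (p : ∀ m : Fin K, 𝒳 m → Fin L → ℝ) (m : Fin K) (y y' : Fin L) (s : ℝ)
    (x : 𝒳 m) : ℝ :=
  p m x y ^ (1 - s) * p m x y' ^ s / chernoffM p m y y' s

/-- Weight of an observation under the tilted product measure `ℚ_{y,y',r,s}`. -/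
def Qweight (p : ∀ m : Fin K, 𝒳 m → Fin L → ℝ) (r : Fin K → ℕ) (y y' : Fin L)
    (s : ℝ) (x : Obs 𝒳 r) : ℝ :=
  ∏ m, ∏ t, qTilt p m y y' s (x m t)

/-- Expectation under the tilted product measure `ℚ_{y,y',r,s}`. -/
def Qexp (p : ∀ m : Fin K, 𝒳 m → Fin L → ℝ) (r : Fin K → ℕ) (y y' : Fin L)
    (s : ℝ) (f : Obs 𝒳 r → ℝ) : ℝ :=
  ∑ x : Obs 𝒳 r, Qweight p r y y' s x * f x

/-- Probability of an event under the tilted product measure `ℚ_{y,y',r,s}`. -/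
def Qprob (p : ∀ m : Fin K, 𝒳 m → Fin L → ℝ) (r : Fin K → ℕ) (y y' : Fin L)
    (s : ℝ) (E : Set (Obs 𝒳 r)) : ℝ :=
  ∑ x : Obs 𝒳 r, E.indicator (Qweight p r y y' s) x

/-- Variance under the tilted product measure `ℚ_{y,y',r,s}`. -/
def Qvar (p : ∀ m : Fin K, 𝒳 m → Fin L → ℝ) (r : Fin K → ℕ) (y y' : Fin L)
    (s : ℝ) (f : Obs 𝒳 r → ℝ) : ℝ :=
  Qexp p r y y' s (fun x => (f x - Qexp p r y y' s f) ^ 2)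

/-- True feasible set `ℛ(α)` (with MAP estimator family `Yhat`). -/
def RtrueSet (p : ∀ m : Fin K, 𝒳 m → Fin L → ℝ)
    (Yhat : ∀ r : Fin K → ℕ, Obs 𝒳 r → Fin L) (α : Fin L → ℝ) : Set (Fin K → ℕ) :=
  {r | ∀ y, Pe p r y (Yhat r) ≤ α y}

/-- Surrogate feasible set `ℛ̄(α)`. -/
def RbarSet (π : Fin L → ℝ) (p : ∀ m : Fin K, 𝒳 m → Fin L → ℝ)
    (α : Fin L → ℝ) : Set (Fin K → ℕ) :=
  {r | ∀ y, PeBar π p r y ≤ α y}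

/-- True optimal cost `OPT(α)` (with `+∞` for the empty feasible set). -/
def OPTtrue (p : ∀ m : Fin K, 𝒳 m → Fin L → ℝ)
    (Yhat : ∀ r : Fin K → ℕ, Obs 𝒳 r → Fin L) (c : Fin K → ℝ) (α : Fin L → ℝ) : ℝ≥0∞ :=
  ⨅ r ∈ RtrueSet p Yhat α, ENNReal.ofReal (cost c r)

/-- Surrogate optimal cost `OPT̄(α)` (with `+∞` for the empty feasible set). -/
def OPTbar (π : Fin L → ℝ) (p : ∀ m : Fin K, 𝒳 m → Fin L → ℝ)
    (c : Fin K → ℝ) (α : Fin L → ℝ) : ℝ≥0∞ :=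
  ⨅ r ∈ RbarSet π p α, ENNReal.ofReal (cost c r)



section Tensor

variable {I : Type*} [Fintype I] [DecidableEq I] {A : I → Type*} [∀ i, Fintype (A i)]

/-- Expectation of `f` under the product weight `∏ i, w i (x i)`. -/
def tE (w : ∀ i, A i → ℝ) (f : (∀ i, A i) → ℝ) : ℝ :=
  ∑ x : ∀ i, A i, (∏ i, w i (x i)) * f x

lemma tE_prod (w : ∀ i, A i → ℝ) (h : ∀ i, A i → ℝ) :
    tE w (fun x => ∏ i, h i (x i)) = ∏ i, ∑ a, w i a * h i a := by
  unfold tE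
  rw [show (∏ i, ∑ a, w i a * h i a)
      = ∑ x ∈ Fintype.piFinset (fun _ : I => (Finset.univ : Finset _)),
          ∏ i, w i (x i) * h i (x i) from Finset.prod_univ_sum _ _]
  rw [Fintype.piFinset_univ]
  exact Finset.sum_congr rfl fun x _ => (Finset.prod_mul_distrib).symm

lemma tE_one (w : ∀ i, A i → ℝ) (hw : ∀ i, ∑ a, w i a = 1) :
    tE w (fun _ => (1 : ℝ)) = 1 := by
  have := tE_prod w (fun _ _ => (1 : ℝ))
  simpa [hw] using this

lemma tE_const (w : ∀ i, A i → ℝ) (hw : ∀ i, ∑ a, w i a = 1) (c : ℝ) :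
    tE w (fun _ => c) = c := by
  have h1 := tE_one w hw
  unfold tE at h1 ⊢
  calc ∑ x : ∀ i, A i, (∏ i, w i (x i)) * c
      = (∑ x : ∀ i, A i, (∏ i, w i (x i)) * 1) * c := by
        rw [Finset.sum_mul]; exact Finset.sum_congr rfl fun x _ => by ring
    _ = c := by rw [h1, one_mul]

lemma tE_add (w : ∀ i, A i → ℝ) (f g : (∀ i, A i) → ℝ) :
    tE w (fun x => f x + g x) = tE w f + tE w g := by
  unfold tE
  rw [← Finset.sum_add_distrib]
  exact Finset.sum_congr rfl fun x _ => by ring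

lemma tE_sum (w : ∀ i, A i → ℝ) {J : Type*} (s : Finset J) (F : J → (∀ i, A i) → ℝ) :
    tE w (fun x => ∑ j ∈ s, F j x) = ∑ j ∈ s, tE w (F j) := by
  unfold tE
  simp_rw [Finset.mul_sum]
  rw [Finset.sum_comm]

lemma tE_coord (w : ∀ i, A i → ℝ) (hw : ∀ i, ∑ a, w i a = 1) (i : I) (g : A i → ℝ) :
    tE w (fun x => g (x i)) = ∑ a, w i a * g a := by
  have key := tE_prod w (fun k a => if e : k = i then g (e ▸ a) else 1)
  have l1 : (fun x : ∀ i, A i => ∏ k, if e : k = i then g (e ▸ x k) else 1)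
      = fun x => g (x i) := by
    funext x
    rw [Finset.prod_eq_single i (fun b _ hb => by rw [dif_neg hb]) (by simp)]
    simp
  have l2 : ∀ k, (∑ a, w k a * if e : k = i then g (e ▸ a) else 1)
      = if k = i then ∑ a, w i a * g a else 1 := by
    intro k
    by_cases hk : k = i
    · subst hk; simp
    · simp [dif_neg hk, hw k, hk]
  rw [l1] at key
  rw [key]
  rw [Finset.prod_congr rfl fun k _ => l2 k]
  rw [Finset.prod_ite_eq' Finset.univ i (fun _ => ∑ a, w i a * g a)]
  simp

lemma tE_coord2 (w : ∀ i, A i → ℝ) (hw : ∀ i, ∑ a, w i a = 1) {i j : I} (hij : i ≠ j)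
    (g : A i → ℝ) (g' : A j → ℝ) :
    tE w (fun x => g (x i) * g' (x j)) = (∑ a, w i a * g a) * (∑ a, w j a * g' a) := by
  have key := tE_prod w (fun k a =>
    (if e : k = i then g (e ▸ a) else 1) * (if e : k = j then g' (e ▸ a) else 1))
  have l1 : (fun x : ∀ i, A i => ∏ k,
      (if e : k = i then g (e ▸ x k) else 1) * (if e : k = j then g' (e ▸ x k) else 1))
      = fun x => g (x i) * g' (x j) := by
    funext x
    rw [Finset.prod_mul_distrib]
    congr 1
    · rw [Finset.prod_eq_single i (fun b _ hb => by rw [dif_neg hb]) (by simp)]; simp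
    · rw [Finset.prod_eq_single j (fun b _ hb => by rw [dif_neg hb]) (by simp)]; simp
  have l2 : ∀ k, (∑ a, w k a *
      ((if e : k = i then g (e ▸ a) else 1) * (if e : k = j then g' (e ▸ a) else 1)))
      = if k = i then ∑ a, w i a * g a else (if k = j then ∑ a, w j a * g' a else 1) := by
    intro k
    by_cases hk : k = i
    · subst hk; simp [dif_neg hij]
    · by_cases hk' : k = j
      · subst hk'; simp [dif_neg hk, hk]
      · simp [dif_neg hk, dif_neg hk', hw k, hk, hk']
  rw [l1] at key
  rw [key, Finset.prod_congr rfl fun k _ => l2 k]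
  rw [← Finset.mul_prod_erase _ _ (Finset.mem_univ i),
    ← Finset.mul_prod_erase _ _ (Finset.mem_erase.mpr ⟨Ne.symm hij, Finset.mem_univ j⟩),
    Finset.prod_eq_one (fun k hk => by
      have h1 := (Finset.mem_erase.mp hk)
      have h2 := Finset.mem_erase.mp h1.2
      simp [h1.1, h2.1]),
    if_pos rfl, if_neg (Ne.symm hij), if_pos rfl]
  ring

end Tensor

section Tensor2
variable {I : Type*} [Fintype I] [DecidableEq I] {A : I → Type*} [∀ i, Fintype (A i)]

lemma tE_var (w : ∀ i, A i → ℝ) (hw : ∀ i, ∑ a, w i a = 1)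
    (g : ∀ i, A i → ℝ) (c : ℝ) :
    tE w (fun x => (c + ∑ i, g i (x i) - tE w (fun x => c + ∑ i, g i (x i))) ^ 2)
      = ∑ i, ∑ a, w i a * (g i a - ∑ b, w i b * g i b) ^ 2 := by
  set μ : I → ℝ := fun i => ∑ b, w i b * g i b with hμ
  have hmean : tE w (fun x => c + ∑ i, g i (x i)) = c + ∑ i, μ i := by
    rw [tE_add w (fun _ => c) (fun x => ∑ i, g i (x i)), tE_const w hw,
      tE_sum w Finset.univ (fun i x => g i (x i))]
    congr 1
    exact Finset.sum_congr rfl fun i _ => tE_coord w hw i (g i)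
  rw [hmean]
  have hcent : ∀ x : ∀ i, A i, c + ∑ i, g i (x i) - (c + ∑ i, μ i)
      = ∑ i, (g i (x i) - μ i) := by
    intro x
    rw [Finset.sum_sub_distrib]
    ring
  have hzero : ∀ i, (∑ a, w i a * (g i a - μ i)) = 0 := by
    intro i
    simp_rw [mul_sub]
    rw [Finset.sum_sub_distrib, ← Finset.sum_mul, hw i]
    simp [hμ]
  calc tE w (fun x => (c + ∑ i, g i (x i) - (c + ∑ i, μ i)) ^ 2)
      = tE w (fun x => ∑ i, ∑ j, (g i (x i) - μ i) * (g j (x j) - μ j)) := by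
        apply congrArg
        funext x
        rw [hcent x, sq, Finset.sum_mul_sum]
    _ = ∑ i, ∑ j, tE w (fun x => (g i (x i) - μ i) * (g j (x j) - μ j)) := by
        rw [tE_sum]
        exact Finset.sum_congr rfl fun i _ => by rw [tE_sum]
    _ = ∑ i, ∑ a, w i a * (g i a - μ i) ^ 2 := by
        refine Finset.sum_congr rfl fun i _ => ?_
        rw [Finset.sum_eq_single i (fun j _ hj => by
          rw [tE_coord2 w hw (Ne.symm hj) (fun a => g i a - μ i) (fun a => g j a - μ j),
            hzero i, zero_mul]) (by simp)]
        rw [show (fun x : ∀ i, A i => (g i (x i) - μ i) * (g i (x i) - μ i))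
            = fun x => (fun a => (g i a - μ i) * (g i a - μ i)) (x i) from rfl,
          tE_coord w hw i (fun a => (g i a - μ i) * (g i a - μ i))]
        exact Finset.sum_congr rfl fun a _ => by ring

end Tensor2

section Aux

variable {L K : ℕ} {𝒳 : Fin K → Type} [∀ m, Fintype (𝒳 m)]

/-- Per-symbol log-likelihood ratio. -/
def fsym (p : ∀ m : Fin K, 𝒳 m → Fin L → ℝ) (m : Fin K) (y y' : Fin L) (x : 𝒳 m) : ℝ :=
  Real.log (p m x y' / p m x y)

/-- Per-symbol variance of `fsym` under the tilted distribution. -/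
def Vsym (p : ∀ m : Fin K, 𝒳 m → Fin L → ℝ) (m : Fin K) (y y' : Fin L) (s : ℝ) : ℝ :=
  ∑ x, qTilt p m y y' s x *
    (fsym p m y y' x - ∑ b, qTilt p m y y' s b * fsym p m y y' b) ^ 2

variable {p : ∀ m : Fin K, 𝒳 m → Fin L → ℝ}

lemma Xnonempty (hp1 : ∀ (m : Fin K) (y : Fin L), ∑ x : 𝒳 m, p m x y = 1)
    [NeZero L] (m : Fin K) : Nonempty (𝒳 m) := by
  by_contra h
  have hE : IsEmpty (𝒳 m) := not_nonempty_iff.mp h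
  have := hp1 m ⟨0, Nat.pos_of_ne_zero (NeZero.ne L)⟩
  rw [Finset.univ_eq_empty, Finset.sum_empty] at this
  exact zero_ne_one this

lemma chernoffM_pos (hp : ∀ (m : Fin K) (x : 𝒳 m) (y : Fin L), 0 < p m x y)
    (hp1 : ∀ (m : Fin K) (y : Fin L), ∑ x : 𝒳 m, p m x y = 1)
    [NeZero L] (m : Fin K) (y y' : Fin L) (s : ℝ) :
    0 < chernoffM p m y y' s := by
  have := Xnonempty hp1 (p := p) m
  exact Finset.sum_pos (fun x _ => mul_pos (Real.rpow_pos_of_pos (hp m x y) _)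
    (Real.rpow_pos_of_pos (hp m x y') _)) Finset.univ_nonempty

lemma qTilt_pos (hp : ∀ (m : Fin K) (x : 𝒳 m) (y : Fin L), 0 < p m x y)
    (hp1 : ∀ (m : Fin K) (y : Fin L), ∑ x : 𝒳 m, p m x y = 1)
    [NeZero L] (m : Fin K) (y y' : Fin L) (s : ℝ) (x : 𝒳 m) :
    0 < qTilt p m y y' s x :=
  div_pos (mul_pos (Real.rpow_pos_of_pos (hp m x y) _)
    (Real.rpow_pos_of_pos (hp m x y') _)) (chernoffM_pos hp hp1 m y y' s)

lemma qTilt_sum (hp : ∀ (m : Fin K) (x : 𝒳 m) (y : Fin L), 0 < p m x y)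
    (hp1 : ∀ (m : Fin K) (y : Fin L), ∑ x : 𝒳 m, p m x y = 1)
    [NeZero L] (m : Fin K) (y y' : Fin L) (s : ℝ) :
    ∑ x, qTilt p m y y' s x = 1 := by
  unfold qTilt
  rw [← Finset.sum_div]
  rw [div_eq_one_iff_eq (ne_of_gt (chernoffM_pos hp hp1 m y y' s))]
  rfl

lemma Vsym_nonneg (hp : ∀ (m : Fin K) (x : 𝒳 m) (y : Fin L), 0 < p m x y)
    (hp1 : ∀ (m : Fin K) (y : Fin L), ∑ x : 𝒳 m, p m x y = 1)
    [NeZero L] (m : Fin K) (y y' : Fin L) (s : ℝ) :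
    0 ≤ Vsym p m y y' s :=
  Finset.sum_nonneg fun x _ =>
    mul_nonneg (le_of_lt (qTilt_pos hp hp1 m y y' s x)) (sq_nonneg _)

lemma Vsym_pos (hp : ∀ (m : Fin K) (x : 𝒳 m) (y : Fin L), 0 < p m x y)
    (hp1 : ∀ (m : Fin K) (y : Fin L), ∑ x : 𝒳 m, p m x y = 1)
    [NeZero L] (m : Fin K) (y y' : Fin L)
    (hne : (fun x => p m x y) ≠ fun x => p m x y') (s : ℝ) :
    0 < Vsym p m y y' s := by
  rcases lt_or_eq_of_le (Vsym_nonneg hp hp1 m y y' s) with h | h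
  · exact h
  exfalso
  set μ : ℝ := ∑ b, qTilt p m y y' s b * fsym p m y y' b with hμdef
  have hall : ∀ x : 𝒳 m, fsym p m y y' x = μ := by
    intro x
    have hterm := (Finset.sum_eq_zero_iff_of_nonneg (fun x _ =>
      mul_nonneg (le_of_lt (qTilt_pos hp hp1 m y y' s x)) (sq_nonneg _))).mp h.symm
      x (Finset.mem_univ x)
    have h2 : (fsym p m y y' x - μ) ^ 2 = 0 := by
      rcases mul_eq_zero.mp hterm with h' | h'
      · exact absurd h' (ne_of_gt (qTilt_pos hp hp1 m y y' s x))
      · exact h'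
    have := pow_eq_zero_iff (n := 2) (by norm_num) |>.mp h2
    linarith [this]
  have hexp : ∀ x : 𝒳 m, p m x y' = Real.exp μ * p m x y := by
    intro x
    have hratio : p m x y' / p m x y = Real.exp μ := by
      rw [← hall x]
      exact (Real.exp_log (div_pos (hp m x y') (hp m x y))).symm
    exact (div_eq_iff (ne_of_gt (hp m x y))).mp hratio
  have hsum : (1 : ℝ) = Real.exp μ * 1 := by
    calc (1 : ℝ) = ∑ x, p m x y' := (hp1 m y').symm
    _ = ∑ x, Real.exp μ * p m x y := Finset.sum_congr rfl fun x _ => hexp x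
    _ = Real.exp μ * ∑ x, p m x y := by rw [Finset.mul_sum]
    _ = Real.exp μ * 1 := by rw [hp1 m y]
  have hexp1 : Real.exp μ = 1 := by linarith [hsum]
  apply hne
  funext x
  have := hexp x
  rw [hexp1, one_mul] at this
  exact this.symm

lemma cont_rpow_base (a : ℝ) (ha : 0 < a) : Continuous fun s : ℝ => a ^ s := by
  have : (fun s : ℝ => a ^ s) = fun s => Real.exp (Real.log a * s) := by
    funext s; rw [Real.rpow_def_of_pos ha]
  rw [this]
  exact Real.continuous_exp.comp (continuous_const.mul continuous_id)

lemma qTilt_cont (hp : ∀ (m : Fin K) (x : 𝒳 m) (y : Fin L), 0 < p m x y)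
    (hp1 : ∀ (m : Fin K) (y : Fin L), ∑ x : 𝒳 m, p m x y = 1)
    [NeZero L] (m : Fin K) (y y' : Fin L) (x : 𝒳 m) :
    Continuous fun s : ℝ => qTilt p m y y' s x := by
  have hnum : ∀ b : 𝒳 m, Continuous fun s : ℝ => p m b y ^ (1 - s) * p m b y' ^ s :=
    fun b => ((cont_rpow_base _ (hp m b y)).comp (continuous_const.sub continuous_id)).mul
      (cont_rpow_base _ (hp m b y'))
  have hM : Continuous fun s : ℝ => chernoffM p m y y' s :=
    continuous_finset_sum _ fun b _ => hnum b
  exact (hnum x).div hM fun s => ne_of_gt (chernoffM_pos hp hp1 m y y' s)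

lemma Vsym_cont (hp : ∀ (m : Fin K) (x : 𝒳 m) (y : Fin L), 0 < p m x y)
    (hp1 : ∀ (m : Fin K) (y : Fin L), ∑ x : 𝒳 m, p m x y = 1)
    [NeZero L] (m : Fin K) (y y' : Fin L) :
    Continuous fun s : ℝ => Vsym p m y y' s := by
  unfold Vsym
  exact continuous_finset_sum _ fun x _ => (qTilt_cont hp hp1 m y y' x).mul
    (((continuous_const.sub (continuous_finset_sum _ fun b _ =>
      (qTilt_cont hp hp1 m y y' b).mul continuous_const))).pow 2)

/-- Sum-to-one for the product weight on `Fin n → X`. -/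
lemma pi_weight_sum {X : Type*} [Fintype X] (q : X → ℝ) (hq : ∑ x, q x = 1) (n : ℕ) :
    ∑ a : Fin n → X, ∏ t, q (a t) = 1 := by
  have := tE_one (I := Fin n) (A := fun _ => X) (fun _ => q) (fun _ => hq)
  unfold tE at this
  simpa using this

/-- Variance tensorization for the tilted product measure. -/
lemma Qvar_eq (π : Fin L → ℝ) (hp : ∀ (m : Fin K) (x : 𝒳 m) (y : Fin L), 0 < p m x y)
    (hp1 : ∀ (m : Fin K) (y : Fin L), ∑ x : 𝒳 m, p m x y = 1)
    [NeZero L] (r : Fin K → ℕ) (y y' : Fin L) (s : ℝ) :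
    Qvar p r y y' s (LLdiff π p r y y') = ∑ m, (r m : ℝ) * Vsym p m y y' s := by
  set w : ∀ m : Fin K, (Fin (r m) → 𝒳 m) → ℝ :=
    fun m a => ∏ t, qTilt p m y y' s (a t) with hwdef
  have hw : ∀ m, ∑ a, w m a = 1 := fun m =>
    pi_weight_sum (qTilt p m y y' s) (qTilt_sum hp hp1 m y y' s) (r m)
  set g : ∀ m : Fin K, (Fin (r m) → 𝒳 m) → ℝ :=
    fun m a => ∑ t, fsym p m y y' (a t) with hgdef
  have key := tE_var w hw g (Real.log (π y' / π y))
  have hQ : Qvar p r y y' s (LLdiff π p r y y')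
      = tE w (fun x => (Real.log (π y' / π y) + ∑ m, g m (x m)
          - tE w (fun x => Real.log (π y' / π y) + ∑ m, g m (x m))) ^ 2) := rfl
  rw [hQ, key]
  refine Finset.sum_congr rfl fun m _ => ?_
  have inner := tE_var (I := Fin (r m)) (A := fun _ => 𝒳 m)
    (fun _ => qTilt p m y y' s) (fun _ => qTilt_sum hp hp1 m y y' s)
    (fun _ => fsym p m y y') 0
  simp only [zero_add] at inner
  have lhs_eq : (∑ a, w m a * (g m a - ∑ b, w m b * g m b) ^ 2)
      = tE (I := Fin (r m)) (A := fun _ => 𝒳 m) (fun _ => qTilt p m y y' s)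
          (fun a => (∑ t, fsym p m y y' (a t)
            - tE (I := Fin (r m)) (A := fun _ => 𝒳 m) (fun _ => qTilt p m y y' s)
                (fun a => ∑ t, fsym p m y y' (a t))) ^ 2) := rfl
  rw [lhs_eq, inner, Finset.sum_const, Finset.card_univ, Fintype.card_fin,
    nsmul_eq_mul]
  rfl

end Aux

/-- Uniform variance lower bound under the tilted measure.
For fixed `δ ∈ (0,1/2)` there is `v_min > 0` such that for all distinct
`y ≠ y'`, all plans `r`, and all `s ∈ [δ, 1-δ]`:
`Var_ℚ(Δ_{y,y'}(r)) ≥ v_min · n_{y,y'}(r)`. -/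
theorem variance_lower_bound
    (hL : 2 ≤ L)
    (π : Fin L → ℝ) (p : ∀ m : Fin K, 𝒳 m → Fin L → ℝ)
    (hπ : ∀ y, 0 < π y) (hπ1 : ∑ y, π y = 1)
    (hp : ∀ (m : Fin K) (x : 𝒳 m) (y : Fin L), 0 < p m x y)
    (hp1 : ∀ (m : Fin K) (y : Fin L), ∑ x : 𝒳 m, p m x y = 1)
    (δ : ℝ) (hδ : δ ∈ Set.Ioo (0 : ℝ) (1/2)) :
    ∃ vmin > (0 : ℝ),
      ∀ y y' : Fin L, y ≠ y' → ∀ (r : Fin K → ℕ), ∀ s ∈ Set.Icc δ (1 - δ),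
        vmin * (effSample p r y y' : ℝ) ≤ Qvar p r y y' s (LLdiff π p r y y') := by
  have hNZ : NeZero L := ⟨by omega⟩
  obtain ⟨hδ0, hδhalf⟩ := hδ
  have hIcc_ne : (Set.Icc δ (1 - δ)).Nonempty := Set.nonempty_Icc.mpr (by linarith)
  -- per-triple positive lower bound on `Vsym` over the compact interval
  have hper : ∀ (y y' : Fin L) (m : Fin K), ∃ v : ℝ, 0 < v ∧
      ∀ s ∈ Set.Icc δ (1 - δ),
        ((fun x => p m x y) ≠ fun x => p m x y') → v ≤ Vsym p m y y' s := by
    intro y y' m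
    by_cases hne : (fun x => p m x y) = fun x => p m x y'
    · exact ⟨1, one_pos, fun s _ h => absurd hne h⟩
    · obtain ⟨s₀, hs₀, hmin⟩ := isCompact_Icc.exists_isMinOn hIcc_ne
        ((Vsym_cont hp hp1 m y y').continuousOn)
      refine ⟨Vsym p m y y' s₀, Vsym_pos hp hp1 m y y' hne s₀, fun s hs _ => hmin hs⟩
  choose v hvpos hvle using hper
  set S : Finset ℝ :=
    insert (1 : ℝ) ((Finset.univ : Finset (Fin L × Fin L × Fin K)).image
      fun t => v t.1 t.2.1 t.2.2) with hS
  have hSne : S.Nonempty := ⟨1, Finset.mem_insert_self _ _⟩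
  refine ⟨S.min' hSne, ?_, ?_⟩
  · show (0:ℝ) < S.min' hSne
    rw [Finset.lt_min'_iff]
    intro a ha
    rcases Finset.mem_insert.mp ha with h | h
    · rw [h]; exact one_pos
    · obtain ⟨t, _, ht⟩ := Finset.mem_image.mp h
      rw [← ht]; exact hvpos t.1 t.2.1 t.2.2
  · intro y y' hyy' r s hs
    have hvmin_le : ∀ m : Fin K, S.min' hSne ≤ v y y' m := fun m =>
      Finset.min'_le _ _ (Finset.mem_insert_of_mem
        (Finset.mem_image.mpr ⟨(y, y', m), Finset.mem_univ _, rfl⟩))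
    rw [Qvar_eq π hp hp1 r y y' s]
    unfold effSample
    rw [Nat.cast_sum]
    calc S.min' hSne * ∑ m ∈ Finset.univ.filter
          (fun m => (fun x => p m x y) ≠ fun x => p m x y'), (r m : ℝ)
        = ∑ m ∈ Finset.univ.filter
            (fun m => (fun x => p m x y) ≠ fun x => p m x y'),
            S.min' hSne * (r m : ℝ) := Finset.mul_sum _ _ _
      _ ≤ ∑ m ∈ Finset.univ.filter
            (fun m => (fun x => p m x y) ≠ fun x => p m x y'),
            (r m : ℝ) * Vsym p m y y' s := by
          refine Finset.sum_le_sum fun m hm => ?_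
          have hmne := (Finset.mem_filter.mp hm).2
          have h1 : S.min' hSne ≤ Vsym p m y y' s :=
            le_trans (hvmin_le m) (hvle y y' m s hs hmne)
          have h2 : (0 : ℝ) ≤ (r m : ℝ) := Nat.cast_nonneg _
          nlinarith
      _ ≤ ∑ m, (r m : ℝ) * Vsym p m y y' s := by
          refine Finset.sum_le_sum_of_subset_of_nonneg (Finset.filter_subset _ _)
            fun m _ _ => mul_nonneg (Nat.cast_nonneg _) (Vsym_nonneg hp hp1 m y y' s)


end

end MultiLLM
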